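/- With δ* as the minimizing noise, the optimal Hamiltonian H⁻(G, μ, t) := H̃⁻(G, μ, δ*, t) equals (1/2)e^{−α(t−t₀)} Σₖ ‖y_k − h_k(E)‖²_Q − (1/2)e^{α(t−t₀)}(vec_se(μ₁)ᵀ S₁⁻¹ vec_se(μ₁) + μ₂ᵀ S₂⁻¹ μ₂) − trace(μ₁ᵀ mat_se(v)), for G = (E, v) ∈ SE(3) × ℝ⁶. -/
import Mathlib


open Matrix

/-- The parametrization `mat_se : ℝ⁶ → 𝔰𝔢(3)`. -/
noncomputable def matSe (η : Fin 6 → ℝ) : Matrix (Fin 4) (Fin 4) ℝ :=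
  !![0, -η 2 / Real.sqrt 2, η 1 / Real.sqrt 2, η 3;
     η 2 / Real.sqrt 2, 0, -η 0 / Real.sqrt 2, η 4;
     -η 1 / Real.sqrt 2, η 0 / Real.sqrt 2, 0, η 5;
     0, 0, 0, 0]

/-- Membership in `𝔰𝔢(3)`. -/
def isSe3 (A : Matrix (Fin 4) (Fin 4) ℝ) : Prop :=
  (∀ i j : Fin 3, A i.castSucc j.castSucc = - A j.castSucc i.castSucc) ∧
  (∀ j : Fin 4, A 3 j = 0)

/-- The inverse parametrization `vec_se : 𝔰𝔢(3) → ℝ⁶`. -/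
noncomputable def vecSe (A : Matrix (Fin 4) (Fin 4) ℝ) : Fin 6 → ℝ :=
  ![Real.sqrt 2 * A 2 1, Real.sqrt 2 * A 0 2, Real.sqrt 2 * A 1 0, A 0 3, A 1 3, A 2 3]

/-- `Î ∈ ℝ^{2×4}`. -/
noncomputable def Ihat : Matrix (Fin 2) (Fin 4) ℝ := !![1, 0, 0, 0; 0, 1, 0, 0]

/-- Third standard basis vector `e₃⁴` of `ℝ⁴`. -/
noncomputable def e3vec : Fin 4 → ℝ := Pi.single (2 : Fin 4) 1

/-- `κ_k(E) = (e₃⁴)ᵀ E⁻¹ g_k`. -/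
noncomputable def kappa (E : Matrix (Fin 4) (Fin 4) ℝ) (g : Fin 4 → ℝ) : ℝ :=
  e3vec ⬝ᵥ (E⁻¹ *ᵥ g)

/-- The perspective observation `h_k(E) = κ_k(E)⁻¹ · Î E⁻¹ g_k`. -/
noncomputable def hObs (E : Matrix (Fin 4) (Fin 4) ℝ) (g : Fin 4 → ℝ) : Fin 2 → ℝ :=
  (kappa E g)⁻¹ • ((Ihat * E⁻¹) *ᵥ g)

/-- The pre-Hamiltonian `H̃⁻(G,μ,δ,t) = c(δ,ε(G,t),t₀,t) − ⟨μ, f(G)+δ⟩`, with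
`ε_k = y_k − h_k(E)` and `f(G) = (mat_se v, 0)` for `G = (E,v)`. -/
noncomputable def preHamObs {n : ℕ} (S₁ S₂ : Matrix (Fin 6) (Fin 6) ℝ)
    (Q : Matrix (Fin 2) (Fin 2) ℝ) (y : Fin n → Fin 2 → ℝ) (g : Fin n → Fin 4 → ℝ)
    (α t t₀ : ℝ) (E : Matrix (Fin 4) (Fin 4) ℝ) (v : Fin 6 → ℝ)
    (μ₁ : Matrix (Fin 4) (Fin 4) ℝ) (μ₂ : Fin 6 → ℝ)
    (δ₁ : Matrix (Fin 4) (Fin 4) ℝ) (δ₂ : Fin 6 → ℝ) : ℝ :=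
  (1 / 2 : ℝ) * Real.exp (-(α * (t - t₀))) *
      (vecSe δ₁ ⬝ᵥ (S₁ *ᵥ vecSe δ₁) + δ₂ ⬝ᵥ (S₂ *ᵥ δ₂)
        + ∑ k, (y k - hObs E (g k)) ⬝ᵥ (Q *ᵥ (y k - hObs E (g k))))
    - (Matrix.trace (μ₁ᵀ * (matSe v + δ₁)) + μ₂ ⬝ᵥ δ₂)

lemma vecSe_matSe (x : Fin 6 → ℝ) : vecSe (matSe x) = x := by
  have hs : Real.sqrt 2 ≠ 0 := by positivity
  funext i
  fin_cases i <;> simp [vecSe, matSe, Matrix.cons_val_succ] <;>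
    first | rfl | field_simp

lemma trace_mul_matSe (μ : Matrix (Fin 4) (Fin 4) ℝ) (hμ : isSe3 μ) (x : Fin 6 → ℝ) :
    Matrix.trace (μᵀ * matSe x) = vecSe μ ⬝ᵥ x := by
  have h2 : Real.sqrt 2 * Real.sqrt 2 = 2 := Real.mul_self_sqrt (by norm_num)
  have hs : Real.sqrt 2 ≠ 0 := by positivity
  have h01 : μ 0 1 = -μ 1 0 := hμ.1 0 1
  have h12 : μ 1 2 = -μ 2 1 := hμ.1 1 2
  have h20 : μ 2 0 = -μ 0 2 := hμ.1 2 0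
  have h3 := hμ.2
  simp only [Matrix.trace, Matrix.diag, Matrix.mul_apply, Matrix.transpose_apply,
    Fin.sum_univ_four]
  simp [matSe, vecSe, dotProduct, Fin.sum_univ_six, Matrix.cons_val_succ,
    show (5:Fin 6) = (4:Fin 5).succ from rfl, show (4:Fin 5) = (3:Fin 4).succ from rfl,
    h01, h12, h20, h3]
  field_simp
  linear_combination (-(μ 2 1 * x 0) - μ 0 2 * x 1 - μ 1 0 * x 2) * h2

lemma quadKey {m : ℕ} (S : Matrix (Fin m) (Fin m) ℝ) (hS : S.PosDef) (c : ℝ) (w : Fin m → ℝ) :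
    (c • (S⁻¹ *ᵥ w)) ⬝ᵥ (S *ᵥ (c • (S⁻¹ *ᵥ w))) = c * c * (w ⬝ᵥ (S⁻¹ *ᵥ w)) := by
  have hdet : IsUnit S.det := isUnit_iff_ne_zero.2 hS.det_pos.ne'
  have key : S *ᵥ (S⁻¹ *ᵥ w) = w := by
    rw [Matrix.mulVec_mulVec, Matrix.mul_nonsing_inv _ hdet, Matrix.one_mulVec]
  rw [Matrix.mulVec_smul, key, smul_dotProduct, dotProduct_smul, dotProduct_comm]
  simp [smul_eq_mul]; ring

/-- The optimal Hamiltonian: evaluating the pre-Hamiltonian at the minimizing noise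
`δ* = (mat_se(e^{α(t−t₀)}S₁⁻¹vec_se μ₁), e^{α(t−t₀)}S₂⁻¹μ₂)` yields
`H⁻(G,μ,t) = (1/2)e^{−α(t−t₀)}Σₖ‖y_k − h_k(E)‖²_Q −
(1/2)e^{α(t−t₀)}(vec_se(μ₁)ᵀS₁⁻¹vec_se(μ₁) + μ₂ᵀS₂⁻¹μ₂) − trace(μ₁ᵀ mat_se v)`. -/
theorem stmt16 {n : ℕ} (S₁ S₂ : Matrix (Fin 6) (Fin 6) ℝ)
    (hS₁ : S₁.PosDef) (hS₂ : S₂.PosDef)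
    (Q : Matrix (Fin 2) (Fin 2) ℝ) (y : Fin n → Fin 2 → ℝ) (g : Fin n → Fin 4 → ℝ)
    (α t t₀ : ℝ) (E : Matrix (Fin 4) (Fin 4) ℝ) (v : Fin 6 → ℝ)
    (μ₁ : Matrix (Fin 4) (Fin 4) ℝ) (hμ₁ : isSe3 μ₁) (μ₂ : Fin 6 → ℝ) :
    preHamObs S₁ S₂ Q y g α t t₀ E v μ₁ μ₂
        (matSe (Real.exp (α * (t - t₀)) • (S₁⁻¹ *ᵥ vecSe μ₁)))
        (Real.exp (α * (t - t₀)) • (S₂⁻¹ *ᵥ μ₂))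
      = (1 / 2 : ℝ) * Real.exp (-(α * (t - t₀))) *
            (∑ k, (y k - hObs E (g k)) ⬝ᵥ (Q *ᵥ (y k - hObs E (g k))))
        - (1 / 2 : ℝ) * Real.exp (α * (t - t₀)) *
            (vecSe μ₁ ⬝ᵥ (S₁⁻¹ *ᵥ vecSe μ₁) + μ₂ ⬝ᵥ (S₂⁻¹ *ᵥ μ₂))
        - Matrix.trace (μ₁ᵀ * matSe v) := by
  set c := Real.exp (α * (t - t₀)) with hc
  have hce : Real.exp (-(α * (t - t₀))) * (c * c) = c := by
    rw [hc, ← Real.exp_add, ← Real.exp_add]; ring_nf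
  rw [preHamObs, vecSe_matSe, quadKey S₁ hS₁, quadKey S₂ hS₂,
    Matrix.mul_add, Matrix.trace_add, trace_mul_matSe μ₁ hμ₁ v,
    trace_mul_matSe μ₁ hμ₁ _]
  simp only [dotProduct_smul, smul_dotProduct, smul_eq_mul]
  linear_combination (1/2 * (vecSe μ₁ ⬝ᵥ (S₁⁻¹ *ᵥ vecSe μ₁)) + 1/2 * (μ₂ ⬝ᵥ (S₂⁻¹ *ᵥ μ₂))) * hce
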